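/- arXiv:1804.06190 — 2 statements merged into one kernel-verified Lean document; each statement's English description precedes it below -/
import Mathlib

section
/- For every positive integers k and n, and any fixed continuous paths β₁,…,β_k : [0,1] → ℝⁿ, the set of loops α : [0,1] → ℝⁿ with α(0)=α(1)=0 satisfying ∫₀¹ ‖α(t)−β_j(t)‖² dt = ∫₀¹ ‖α(1−t)−β_j(t)‖² dt for all j, and with α ≠ α∘(t ↦ 1−t), is nonempty. -/
open MeasureTheory intervalIntegral
open scoped InnerProductSpace

/-!
Write `α t = c t • v` for a fixed nonzero vector `v` and a continuous scalar profile `c` with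
`c (1 - t) = -c t`. Then `‖α (1 - t) - β t‖² - ‖α t - β t‖² = 4 c t ⟪v, β t⟫`, so each of the `k`
integral equalities is one linear condition `∫₀¹ c ⟪v, β j⟫ = 0` on `c`. Profiles built from `k + 1`
tents with disjoint supports in `[0, 1/2]`, reflected antisymmetrically to `[1/2, 1]`, form a
`(k + 1)`-dimensional family, so some nonzero combination satisfies all `k` conditions; it is
nonzero at the peak of a tent with nonzero coefficient, where `α t ≠ α (1 - t) = -α t`.
-/

noncomputable def tent (x : ℝ) : ℝ := max 0 (min x (1 - x))

@[fun_prop]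
theorem continuous_tent : Continuous tent := by
  unfold tent; fun_prop

theorem tent_of_nonpos {x : ℝ} (hx : x ≤ 0) : tent x = 0 :=
  max_eq_left ((min_le_left _ _).trans hx)

theorem tent_of_one_le {x : ℝ} (hx : 1 ≤ x) : tent x = 0 :=
  max_eq_left ((min_le_right _ _).trans (by linarith))

theorem tent_half : tent (1 / 2) = 1 / 2 := by
  norm_num [tent]

noncomputable def skewTent (N : ℝ) (m : ℕ) (t : ℝ) : ℝ :=
  tent (N * t - m) - tent (N * (1 - t) - m)

@[fun_prop]
theorem continuous_skewTent (N : ℝ) (m : ℕ) : Continuous (skewTent N m) := by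
  unfold skewTent; fun_prop

theorem skewTent_one_sub (N : ℝ) (m : ℕ) (t : ℝ) :
    skewTent N m (1 - t) = -skewTent N m t := by
  simp only [skewTent, sub_sub_cancel, neg_sub]

theorem skewTent_zero {N : ℝ} {m : ℕ} (hm : (m : ℝ) + 1 ≤ N) : skewTent N m 0 = 0 := by
  rw [skewTent, tent_of_nonpos (by simp), tent_of_one_le (by linarith), sub_zero]

theorem skewTent_peak {K i m : ℕ} (hi : i ≤ K) (hm : m ≤ K) :
    skewTent (2 * (K + 1)) i ((m + 1 / 2) / (2 * (K + 1))) = if i = m then 1 / 2 else 0 := by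
  have hN : (2 * ((K : ℝ) + 1)) ≠ 0 := by positivity
  have hiK : (i : ℝ) ≤ K := by exact_mod_cast hi
  have hmK : (m : ℝ) ≤ K := by exact_mod_cast hm
  rw [skewTent, mul_div_cancel₀ _ hN, mul_one_sub, mul_div_cancel₀ _ hN,
    tent_of_one_le (x := 2 * (K + 1) - (m + 1 / 2) - i) (by linarith), sub_zero]
  split_ifs with him
  · subst him; rw [add_sub_cancel_left, tent_half]
  · rcases Nat.lt_or_gt_of_ne him with h | h
    · have h' : (i : ℝ) + 1 ≤ m := by exact_mod_cast h
      exact tent_of_one_le (by linarith)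
    · have h' : (m : ℝ) + 1 ≤ i := by exact_mod_cast h
      exact tent_of_nonpos (by linarith)

theorem exists_skew_profile_integral_mul_eq_zero {ι : Type*} [Fintype ι] (g : ι → ℝ → ℝ)
    (hg : ∀ j, IntervalIntegrable (g j) volume 0 1) :
    ∃ c : ℝ → ℝ, Continuous c ∧ c 0 = 0 ∧ (∀ t, c (1 - t) = -c t) ∧
      (∀ j, ∫ t in (0:ℝ)..1, c t * g j t = 0) ∧ ∃ t ∈ Set.Icc (0:ℝ) 1, c t ≠ 0 := by
  set K := Fintype.card ι
  -- this width puts the `K + 1` tents inside `[0, 1/2]`, so their reflections miss every peak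
  set N : ℝ := 2 * (K + 1)
  have hm : ∀ m : Fin (K + 1), (m : ℕ) ≤ K := fun m => Nat.lt_succ_iff.mp m.isLt
  obtain ⟨a, ha, m, ham⟩ : ∃ a : Fin (K + 1) → ℝ,
      ∑ m, a m • (fun j => ∫ t in (0:ℝ)..1, skewTent N m t * g j t) = 0 ∧ ∃ m, a m ≠ 0 := by
    refine Fintype.not_linearIndependent_iff.mp fun hli => ?_
    simpa [K] using hli.fintype_card_le_finrank
  set c : ℝ → ℝ := fun t => ∑ m, a m * skewTent N m t
  refine ⟨c, by fun_prop, ?_, ?_, ?_, ?_⟩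
  · refine Finset.sum_eq_zero fun i _ => ?_
    have hi : (i : ℝ) ≤ K := by exact_mod_cast hm i
    rw [skewTent_zero (by linarith), mul_zero]
  · intro t
    simp only [c, skewTent_one_sub, mul_neg, Finset.sum_neg_distrib]
  · intro j
    have hint : ∀ i : Fin (K + 1),
        IntervalIntegrable (fun t => skewTent N i t * g j t) volume 0 1 :=
      fun i => (hg j).continuousOn_mul (continuous_skewTent N i).continuousOn
    calc ∫ t in (0:ℝ)..1, c t * g j t
        = ∑ i, ∫ t in (0:ℝ)..1, a i * (skewTent N i t * g j t) := by
          rw [← integral_finsetSum fun i _ => (hint i).const_mul (a i)]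
          simp only [c, Finset.sum_mul, mul_assoc]
      _ = 0 := by
          simpa only [intervalIntegral.integral_const_mul, Finset.sum_apply, Pi.smul_apply,
            smul_eq_mul, Pi.zero_apply] using congrFun ha j
  · refine ⟨(m + 1 / 2) / N, ⟨by positivity, ?_⟩, ?_⟩
    · have h : (m : ℝ) ≤ K := by exact_mod_cast hm m
      rw [div_le_one (by positivity)]
      linarith
    · have hpeak : c ((m + 1 / 2) / N) = a m * (1 / 2) := by
        simp only [c, N, skewTent_peak (hm _) (hm m), Fin.val_inj, mul_ite, mul_zero,
          Finset.sum_ite_eq', Finset.mem_univ, if_true]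
      rw [hpeak]
      exact mul_ne_zero ham (by norm_num)

theorem integral_norm_sub_sq_eq_of_skew {E : Type*} [NormedAddCommGroup E] [InnerProductSpace ℝ E]
    {α β : ℝ → E} (hα : Continuous α) (hβ : Continuous β) (hskew : ∀ t, α (1 - t) = -α t)
    (horth : ∫ t in (0:ℝ)..1, ⟪α t, β t⟫_ℝ = 0) :
    ∫ t in (0:ℝ)..1, ‖α t - β t‖ ^ 2 = ∫ t in (0:ℝ)..1, ‖α (1 - t) - β t‖ ^ 2 := by
  have hpointwise : ∀ t, ‖α (1 - t) - β t‖ ^ 2 = ‖α t - β t‖ ^ 2 + 4 * ⟪α t, β t⟫_ℝ := by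
    intro t
    rw [hskew, ← norm_neg, neg_sub, sub_neg_eq_add, add_comm, norm_add_sq_real, norm_sub_sq_real]
    ring
  simp only [hpointwise]
  have hnorm : Continuous fun t => ‖α t - β t‖ ^ 2 := by fun_prop
  rw [intervalIntegral.integral_add (hnorm.intervalIntegrable _ _)
      (((hα.inner hβ).const_mul 4).intervalIntegrable _ _), intervalIntegral.integral_const_mul,
    horth, mul_zero, add_zero]

theorem stmt0_general (k n : ℕ) (hn : 0 < n)
    (β : Fin k → ℝ → EuclideanSpace ℝ (Fin n)) (hβ : ∀ j, Continuous (β j)) :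
    ∃ α : ℝ → EuclideanSpace ℝ (Fin n), Continuous α ∧ α 0 = 0 ∧ α 1 = 0 ∧
      (∀ j, (∫ t in (0:ℝ)..1, ‖α t - β j t‖ ^ 2) = ∫ t in (0:ℝ)..1, ‖α (1 - t) - β j t‖ ^ 2) ∧
      ∃ t ∈ Set.Icc (0:ℝ) 1, α t ≠ α (1 - t) := by
  set v : EuclideanSpace ℝ (Fin n) := EuclideanSpace.single ⟨0, hn⟩ 1
  have hv : v ≠ 0 := by simp [v]
  obtain ⟨c, hc, hc0, hskew, horth, t, ht, hct⟩ :=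
    exists_skew_profile_integral_mul_eq_zero (fun j t => ⟪v, β j t⟫_ℝ)
      fun j => (continuous_const.inner (hβ j)).intervalIntegrable _ _
  set α : ℝ → EuclideanSpace ℝ (Fin n) := fun s => c s • v
  have hα : Continuous α := hc.smul continuous_const
  have hαskew : ∀ t, α (1 - t) = -α t := fun t => by simp only [α, hskew, neg_smul]
  have hα0 : α 0 = 0 := by simp [α, hc0]
  refine ⟨α, hα, hα0, by simpa [hα0] using hαskew 0, fun j => ?_, t, ht, ?_⟩
  · refine integral_norm_sub_sq_eq_of_skew hα (hβ j) hαskew ?_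
    simpa only [α, real_inner_smul_left] using horth j
  · rw [hαskew, ne_eq, eq_neg_iff_add_eq_zero, ← two_smul ℝ, smul_smul, smul_eq_zero]
    simpa [hct] using hv

/-- For every positive `k`, `n` and continuous paths `β j : [0,1] → ℝⁿ`, there is a loop
`α` at `0` with `∫₀¹ ‖α t - β j t‖² dt = ∫₀¹ ‖α (1-t) - β j t‖² dt` for all `j`,
which is not equal to its own reverse on `[0,1]`. -/
theorem stmt0 (k n : ℕ) (hk : 0 < k) (hn : 0 < n)
    (β : Fin k → ℝ → EuclideanSpace ℝ (Fin n)) (hβ : ∀ j, Continuous (β j)) :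
    ∃ α : ℝ → EuclideanSpace ℝ (Fin n), Continuous α ∧ α 0 = 0 ∧ α 1 = 0 ∧
      (∀ j, (∫ t in (0:ℝ)..1, ‖α t - β j t‖ ^ 2) = ∫ t in (0:ℝ)..1, ‖α (1 - t) - β j t‖ ^ 2) ∧
      ∃ t ∈ Set.Icc (0:ℝ) 1, α t ≠ α (1 - t) :=
  stmt0_general k n hn β hβ
end

section
/- Let X be a topological space with base point x₀ admitting a nonconstant path μ : [0,1] → X with μ(0) = x₀. Then the inclusion of ΩX ∖ Ω_tf into ΩX is a homotopy equivalence, where ΩX is the space of loops at x₀ and Ω_tf is the subspace of loops α with α = α⋆. -/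
/-!
Let `D_s α` be the loop that first runs along `μ` up to time `s` and back, then traverses `α`
on an interval centred at `1/2`, and rests at `x₀` for the remaining time. Then `D_0 = id`, and
`D_s α` is time-symmetric only if `α` is, because the time flip of `[0,1]` restricts to the time
flip of the central interval. But `D_1 α` is never time-symmetric: near the start it visits a
point `μ v ≠ x₀`, while near the end it rests at `x₀`. So `D` deforms `ΩX` into `ΩX ∖ Ω_tf`
while keeping `ΩX ∖ Ω_tf` inside itself, and hence `D_1` is a homotopy inverse of the inclusion.
-/

open Set unitInterval

noncomputable section

namespace ContinuousMap.Homotopy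

variable {Y : Type*} [TopologicalSpace Y] {f : C(Y, Y)} {p : Y → Prop}

def homotopyEquivSubtype (H : Homotopy (ContinuousMap.id Y) f)
    (hH : ∀ s y, p y → p (H (s, y))) (hf : ∀ y, p (f y)) : {y // p y} ≃ₕ Y where
  toFun := ⟨Subtype.val, continuous_subtype_val⟩
  invFun := ⟨fun y => ⟨f y, hf y⟩, f.continuous.subtype_mk hf⟩
  left_inv := ⟨Homotopy.symm
    { toFun := fun q => ⟨H (q.1, q.2), hH q.1 q.2 q.2.2⟩
      continuous_toFun := (H.continuous.comp (continuous_fst.prodMk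
        (continuous_subtype_val.comp continuous_snd))).subtype_mk _
      map_zero_left := fun a => Subtype.ext (H.apply_zero a)
      map_one_left := fun a => Subtype.ext (H.apply_one a) }⟩
  right_inv := ⟨H.symm⟩

end ContinuousMap.Homotopy

variable {X : Type*} [TopologicalSpace X]

local notation "proj" => Set.projIcc (0 : ℝ) 1 zero_le_one

/-- Along `μ` out to `μ s` and back on `[0, 2s/5]`, then `α` on `[2s/5, 1 - 2s/5]`; the clamping
in `proj` keeps the loop at `α 1` on the remaining interval `[1 - 2s/5, 1]`. -/
def detour (μ α : C(I, X)) (s t : I) : X :=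
  if (t : ℝ) ≤ 2 * s / 5 then μ (proj ((s : ℝ) - |5 * (t : ℝ) - s|))
  else α (proj ((t - 2 * s / 5) / (1 - 4 * s / 5)))

lemma one_sub_four_mul_div_five_pos (s : I) : 0 < 1 - 4 * (s : ℝ) / 5 := by
  linarith [s.2.2]

variable {μ α : C(I, X)}

lemma Continuous.detour {Z : Type*} [TopologicalSpace Z] {s t : Z → I} {β : Z → C(I, X)}
    (hs : Continuous s) (hβ : Continuous β) (ht : Continuous t) (hβ0 : ∀ z, β z 0 = μ 0) :
    Continuous fun z => detour μ (β z) (s z) (t z) := by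
  apply Continuous.if_le
  · exact μ.continuous.comp (continuous_projIcc.comp (by fun_prop))
  · refine hβ.eval (continuous_projIcc.comp ?_)
    exact Continuous.div (by fun_prop) (by fun_prop)
      fun z => (one_sub_four_mul_div_five_pos (s z)).ne'
  · fun_prop
  · fun_prop
  · intro z hz
    have hμ : (s z : ℝ) - |5 * (2 * (s z : ℝ) / 5) - s z| = 0 := by
      rw [show 5 * (2 * (s z : ℝ) / 5) - s z = s z by ring, abs_of_nonneg (s z).2.1, sub_self]
    simp [hz, hμ, hβ0]

lemma detour_apply_of_le (s : I) {v : I} (hv : v ≤ s) :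
    detour μ α s (proj (v / 5)) = μ v := by
  have hv : (v : ℝ) ≤ s := hv
  have hv0 := v.2.1
  have hmem : (v : ℝ) / 5 ∈ Icc (0 : ℝ) 1 := ⟨by linarith, by linarith [v.2.2]⟩
  have harg : (s : ℝ) - |5 * ((v : ℝ) / 5) - s| = v := by
    rw [abs_of_nonpos (by linarith)]
    ring
  rw [detour, projIcc_of_mem _ hmem, if_pos (by dsimp only; linarith), harg, projIcc_val]

lemma detour_apply_of_one_sub_le (s : I) {t : I} (ht : 1 - 2 * (s : ℝ) / 5 ≤ t) :
    detour μ α s t = α 1 := by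
  have hs := s.2.2
  have hpos := one_sub_four_mul_div_five_pos s
  rw [detour, if_neg (by linarith), projIcc_eq_one.mpr]
  rw [le_div_iff₀ hpos]
  linarith

lemma detour_apply_zero (s : I) : detour μ α s 0 = μ 0 := by
  simpa using detour_apply_of_le (μ := μ) (α := α) s nonneg'

lemma detour_apply_one (s : I) : detour μ α s 1 = α 1 :=
  detour_apply_of_one_sub_le s (by simp only [Icc.coe_one]; linarith [s.2.1])

lemma detour_apply_middle (h : α 0 = μ 0) (s u : I) :
    detour μ α s (proj (2 * s / 5 + u * (1 - 4 * s / 5))) = α u := by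
  have hpos := one_sub_four_mul_div_five_pos s
  have hs0 := s.2.1
  have hu0 := u.2.1
  have hu1 := u.2.2
  have hmem : 2 * (s : ℝ) / 5 + u * (1 - 4 * s / 5) ∈ Icc (0 : ℝ) 1 :=
    ⟨by positivity, by nlinarith⟩
  rw [detour, projIcc_of_mem _ hmem]
  dsimp only
  split_ifs with hle
  · obtain rfl : u = 0 := Subtype.ext (by simp only [Icc.coe_zero]; nlinarith)
    rw [Icc.coe_zero, zero_mul, add_zero, show 5 * (2 * (s : ℝ) / 5) - s = s by ring,
      abs_of_nonneg hs0, sub_self, h]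
    simp
  · rw [add_sub_cancel_left, mul_div_cancel_right₀ _ hpos.ne', projIcc_val]

lemma detour_zero (h : α 0 = μ 0) : detour μ α 0 = α := by
  funext t
  simpa using detour_apply_middle h 0 t

def IsTimeSymmetric (γ : I → X) : Prop := ∀ t, γ (symm t) = γ t

lemma IsTimeSymmetric.of_detour (h : α 0 = μ 0) {s : I} (hD : IsTimeSymmetric (detour μ α s)) :
    IsTimeSymmetric α := by
  intro u
  calc α (symm u) = detour μ α s (proj (2 * s / 5 + (symm u : ℝ) * (1 - 4 * s / 5))) :=
        (detour_apply_middle h s _).symm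
    _ = detour μ α s (symm (proj (2 * s / 5 + u * (1 - 4 * s / 5)))) := by
        rw [symm_projIcc, coe_symm_eq]
        ring_nf
    _ = detour μ α s (proj (2 * s / 5 + u * (1 - 4 * s / 5))) := hD _
    _ = α u := detour_apply_middle h s u

lemma not_isTimeSymmetric_detour_one (hμ : ∃ v, μ v ≠ α 1) :
    ¬ IsTimeSymmetric (detour μ α 1) := by
  obtain ⟨v, hv⟩ := hμ
  intro hD
  have hfar : 1 - 2 * ((1 : I) : ℝ) / 5 ≤ (symm (proj (v / 5)) : ℝ) := by
    rw [coe_symm_eq, projIcc_of_mem _ ⟨by linarith [v.2.1], by linarith [v.2.2]⟩, Icc.coe_one]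
    dsimp only
    linarith [v.2.2]
  rw [← detour_apply_of_le (α := α) 1 v.2.2, ← hD, detour_apply_of_one_sub_le 1 hfar] at hv
  exact hv rfl

abbrev BasedLoops (x₀ : X) := {α : C(I, X) // α 0 = x₀ ∧ α 1 = x₀}

variable {x₀ : X}

def detourLoop (hμ0 : μ 0 = x₀) (s : I) (α : BasedLoops x₀) : BasedLoops x₀ :=
  ⟨⟨detour μ α.1 s, continuous_const.detour continuous_const continuous_id
    fun _ => α.2.1.trans hμ0.symm⟩,
    by simp [detour_apply_zero, hμ0], by simp [detour_apply_one, α.2.2]⟩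

lemma continuous_detourLoop (hμ0 : μ 0 = x₀) :
    Continuous fun q : I × BasedLoops x₀ => detourLoop hμ0 q.1 q.2 := by
  refine Continuous.subtype_mk (ContinuousMap.continuous_of_continuous_uncurry _ ?_) _
  exact Continuous.detour (by fun_prop) (by fun_prop) (by fun_prop)
    fun q => q.1.2.2.1.trans hμ0.symm

def detourHomotopy (hμ0 : μ 0 = x₀) :
    ContinuousMap.Homotopy (ContinuousMap.id (BasedLoops x₀))
      ⟨detourLoop hμ0 1, (continuous_detourLoop hμ0).comp (Continuous.prodMk_right 1)⟩ where
  toFun q := detourLoop hμ0 q.1 q.2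
  continuous_toFun := continuous_detourLoop hμ0
  map_zero_left α := Subtype.ext (DFunLike.coe_injective (detour_zero (α.2.1.trans hμ0.symm)))
  map_one_left _ := rfl

end

/-- If `X` has a nonconstant path starting at the base point `x₀`, then the inclusion
`ΩX ∖ Ω_tf ↪ ΩX` is a homotopy equivalence. -/
theorem stmt8 (X : Type) [TopologicalSpace X] (x₀ : X)
    (μ : C(unitInterval, X)) (hμ0 : μ 0 = x₀) (hμ : ∃ t, μ t ≠ x₀) :
    ∃ h : ContinuousMap.HomotopyEquiv
        {a : {α : C(unitInterval, X) // α 0 = x₀ ∧ α 1 = x₀} //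
          ¬ ∀ t, a.1 (unitInterval.symm t) = a.1 t}
        {α : C(unitInterval, X) // α 0 = x₀ ∧ α 1 = x₀},
      ∀ a, h.toFun a = a.1 :=
  ⟨(detourHomotopy hμ0).homotopyEquivSubtype
      (fun _ α hα hD => hα (IsTimeSymmetric.of_detour (α.2.1.trans hμ0.symm) hD))
      (fun α => not_isTimeSymmetric_detour_one (by rwa [α.2.2])), fun _ => rfl⟩
end
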